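/- Let $\mathcal{L}$ be a finite dimensional restricted Lie algebra over an algebraically closed field of characteristic $p > 2$ possessing a Richardson module $V$, let $\t$ be a toral subalgebra of $\mathcal{L}$, and let $\mathcal{L}_0 = \mathfrak{c}_{\mathcal{L}}(\t)$ be its centralizer. Then the center $\mathfrak{z}(\mathcal{L}_0)$ contains no nonzero nilpotent elements, i.e., $\mathfrak{z}(\mathcal{L}_0)$ is a toral subalgebra. -/

import Mathlib

/-- A `[p]`-structure (restricted Lie algebra structure) on a Lie algebra `L`. -/
structure PStruct (k L : Type*) [Field k] [LieRing L] [LieAlgebra k L] (p : ℕ) where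
  pow : L → L
  ad_pow : ∀ x : L, LieAlgebra.ad k L (pow x) = (LieAlgebra.ad k L x) ^ p
  pow_smul : ∀ (t : k) (x : L), pow (t • x) = t ^ p • pow x
  pow_add_mem : ∀ x y : L, pow (x + y) - pow x - pow y ∈ LieSubalgebra.lieSpan k L {x, y}

variable {k L : Type*} [Field k] [LieRing L] [LieAlgebra k L] {p : ℕ}

/-- Nilpotent element: some iterate of the `p`-operation kills it. -/
def PStruct.IsNil (P : PStruct k L p) (x : L) : Prop := ∃ N : ℕ, P.pow^[N] x = 0

/-- Semisimple element: lies in the span of the `x^{[p]^i}`, `i ≥ 1`. -/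
def PStruct.IsSs (P : PStruct k L p) (x : L) : Prop :=
  x ∈ Submodule.span k (Set.range fun i : ℕ => P.pow^[i + 1] x)

attribute [local instance 100] LieRing.ofAssociativeRing

/-!
If `x` lies in the span of its iterates `x^[p]^(i+1)`, its image in any restricted representation
is a root of some `∑ cᵢ X ^ p ^ (i + 1) - X`, a polynomial with derivative `-1`, so that image is
semisimple. A toral subalgebra `t` is abelian: `ad s` is semisimple on `t`, and an eigenvector `w` with
`[s, w] = μ w` satisfies `(ad w)² s = 0`, hence `[w, s] = 0` and `μ = 0`.

Put `e = ρ x`. It is nilpotent, hence orthogonal for the trace form to its centralizer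
`ker (ad e)`, whose orthogonal is `range (ad e)`; so `e = [h₁, e]` for some `h₁`. The operators
`ad (ρ s)`, `s ∈ t`, on `End V` are semisimple, commute with each other and with `ad e`, so
replacing `h₁` by its component in their common kernel gives `h` centralizing `ρ t` with
`[h, e] = e`. Writing `h = ρ y + r` with `r ∈ R`, the conditions `[ρ L, R] ⊆ R` and
`ρ L ∩ R = 0` force `y` to centralize `t`; then `[x, y] = 0`, so `e = [r, e] ∈ R ∩ ρ L = 0`.
-/

namespace Module.End

open LinearMap

variable {M : Type*} [AddCommGroup M] [Module k M] {B : End k M}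

lemma IsSemisimple.apply_eq_zero_of_apply_apply_eq_zero (hB : B.IsSemisimple) {m : M}
    (hm : B (B m) = 0) : B m = 0 := by
  have hm2 : m ∈ B.genEigenspace 0 (2 : ℕ) := by
    rw [mem_genEigenspace_nat]
    simpa [sq] using hm
  rw [hB.isFinitelySemisimple.genEigenspace_eq_eigenspace 0 (by norm_num)] at hm2
  simpa using hm2

variable [FiniteDimensional k M]

lemma IsSemisimple.isCompl_ker_range (hB : B.IsSemisimple) : IsCompl (ker B) (range B) := by
  refine (Submodule.isCompl_iff_disjoint _ _ (by
    rw [add_comm, finrank_range_add_finrank_ker])).mpr ?_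
  rw [Submodule.disjoint_def]
  rintro _ hk ⟨w, rfl⟩
  exact hB.apply_eq_zero_of_apply_apply_eq_zero hk

/-- The witness is the `ker B`-component of `n` in `M = ker B ⊕ range B`. -/
lemma IsSemisimple.exists_mem_ker_forall_commute (hB : B.IsSemisimple) (n : M) :
    ∃ a ∈ ker B, ∀ C : End k M, Commute B C → B (C n) = 0 → C a = C n := by
  obtain ⟨a, ha, _, ⟨w, rfl⟩, rfl⟩ :=
    Submodule.mem_sup.mp (hB.isCompl_ker_range.sup_eq_top ▸ Submodule.mem_top (x := n))
  refine ⟨a, ha, fun C hC hCn => ?_⟩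
  have hBC : ∀ v, B (C v) = C (B v) := fun v => LinearMap.congr_fun hC.eq v
  have hCBw : C (B w) = 0 := by
    rw [← hBC]
    refine hB.apply_eq_zero_of_apply_apply_eq_zero ?_
    rw [map_add, map_add, hBC a, mem_ker.mp ha, map_zero, zero_add] at hCn
    rwa [hBC, hBC, ← hBC]
  rw [map_add, hCBw, add_zero]

lemma exists_forall_apply_eq_zero_of_commute_finset (𝒯 : Finset (End k M))
    (hss : ∀ B ∈ 𝒯, B.IsSemisimple) (hcomm : ∀ B ∈ 𝒯, ∀ B' ∈ 𝒯, Commute B B')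
    {U : End k M} (hU : ∀ B ∈ 𝒯, Commute B U) {n : M} (hn : ∀ B ∈ 𝒯, B (U n) = 0) :
    ∃ a, (∀ B ∈ 𝒯, B a = 0) ∧ U a = U n := by
  classical
  induction 𝒯 using Finset.induction_on with
  | empty => exact ⟨n, by simp, rfl⟩
  | insert B₀ 𝒯 _ ih =>
    simp only [Finset.mem_insert, forall_eq_or_imp] at hss hcomm hU hn
    obtain ⟨a₁, ha₁, hUa₁⟩ := ih hss.2 (fun B hB B' hB' => (hcomm.2 B hB).2 B' hB') hU.2 hn.2
    obtain ⟨a, ha, hC⟩ := hss.1.exists_mem_ker_forall_commute a₁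
    refine ⟨a, ?_, ?_⟩
    · simp only [Finset.mem_insert, forall_eq_or_imp]
      refine ⟨ha, fun B hB => ?_⟩
      rw [hC B (hcomm.1.2 B hB) (by rw [ha₁ B hB, map_zero]), ha₁ B hB]
    · rw [hC U hU.1 (by rw [hUa₁]; exact hn.1), hUa₁]

lemma exists_forall_apply_eq_zero_of_commute (𝒯 : Set (End k M))
    (hss : ∀ B ∈ 𝒯, B.IsSemisimple) (hcomm : ∀ B ∈ 𝒯, ∀ B' ∈ 𝒯, Commute B B')
    {U : End k M} (hU : ∀ B ∈ 𝒯, Commute B U) {n : M} (hn : ∀ B ∈ 𝒯, B (U n) = 0) :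
    ∃ a, (∀ B ∈ 𝒯, B a = 0) ∧ U a = U n := by
  obtain ⟨𝒯₀, h𝒯₀, hspan, hli⟩ := exists_linearIndependent k 𝒯
  obtain ⟨a, ha, hUa⟩ := exists_forall_apply_eq_zero_of_commute_finset hli.setFinite.toFinset
    (by simpa using fun B hB => hss B (h𝒯₀ hB))
    (by simpa using fun B hB B' hB' => hcomm B (h𝒯₀ hB) B' (h𝒯₀ hB'))
    (by simpa using fun B hB => hU B (h𝒯₀ hB)) (by simpa using fun B hB => hn B (h𝒯₀ hB))
  refine ⟨a, fun B hB => ?_, hUa⟩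
  have hker : Submodule.span k 𝒯₀ ≤ ker (applyₗ a) :=
    Submodule.span_le.mpr fun B hB => by simpa using ha B (by simpa using hB)
  simpa using hker (hspan ▸ Submodule.subset_span hB)

lemma traceForm_nondegenerate : (LieModule.traceForm k (End k M) M).Nondegenerate := by
  refine (LieModule.traceForm_isSymm k _ M).isRefl.nondegenerate_iff_separatingLeft.mpr ?_
  intro z hz
  ext v
  refine (Module.forall_dual_apply_eq_zero_iff k (z v)).mp fun f => ?_
  have hcomp : z ∘ₗ f.smulRight v = f.smulRight (z v) := by ext; simp
  simpa [LieModule.traceForm_apply_apply, hcomp, trace_smulRight] using hz (f.smulRight v)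

lemma range_ad_eq_orthogonal_ker_ad (e : End k M) :
    range (LieAlgebra.ad k (End k M) e) =
      (LieModule.traceForm k (End k M) M).orthogonal (ker (LieAlgebra.ad k (End k M) e)) := by
  refine Submodule.eq_of_le_of_finrank_eq ?_ ?_
  · rintro _ ⟨a, rfl⟩ c hc
    rw [LieAlgebra.ad_apply, ← LieModule.traceForm_apply_lie_apply, ← lie_skew,
      ← LieAlgebra.ad_apply k, mem_ker.mp hc, neg_zero, map_zero, LinearMap.zero_apply]
  · rw [LinearMap.BilinForm.finrank_orthogonal traceForm_nondegenerate,
      ← finrank_range_add_finrank_ker (LieAlgebra.ad k (End k M) e)]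
    omega

lemma exists_lie_eq_self_of_isNilpotent {e : End k M} (he : IsNilpotent e) :
    ∃ h : End k M, ⁅h, e⁆ = e := by
  have he_mem : e ∈ range (LieAlgebra.ad k (End k M) e) := by
    rw [range_ad_eq_orthogonal_ker_ad]
    intro c hc
    have hce : Commute c e := (commute_iff_lie_eq.mpr (by simpa using hc)).symm
    exact (isNilpotent_trace_of_isNilpotent (hce.isNilpotent_mul_left he)).eq_zero
  obtain ⟨a, ha⟩ := he_mem
  exact ⟨-a, by rw [neg_lie, ← lie_skew, neg_neg]; exact ha⟩

end Module.End

def IsPSemisimple (k : Type*) {A : Type*} [CommSemiring k] [Semiring A] [Algebra k A] (p : ℕ)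
    (a : A) : Prop :=
  a ∈ Submodule.span k (Set.range fun i : ℕ => a ^ p ^ (i + 1))

section IsPSemisimple

variable {A B : Type*} [Ring A] [Algebra k A] [Ring B] [Algebra k B] {a : A}

lemma IsPSemisimple.map (ha : IsPSemisimple k p a) (f : A →ₗ[k] B)
    (hf : ∀ n, f (a ^ p ^ n) = f a ^ p ^ n) : IsPSemisimple k p (f a) := by
  have := Submodule.apply_mem_span_image_of_mem_span f ha
  rwa [← Set.range_comp, Function.comp_def, funext fun i => hf (i + 1)] at this

lemma LieAlgebra.ad_pow_char_pow [CharP k p] [Fact p.Prime] (a : A) (n : ℕ) :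
    ad k A a ^ p ^ n = ad k A (a ^ p ^ n) := by
  nontriviality A
  have : CharP (Module.End k A) p := charP_of_injective_algebraMap' k p
  rw [ad_eq_lmul_left_sub_lmul_right, Pi.sub_apply, Pi.sub_apply,
    sub_pow_char_pow_of_commute p n (LinearMap.commute_mulLeft_right a a),
    LinearMap.pow_mulLeft, LinearMap.pow_mulRight]

lemma IsPSemisimple.ad [CharP k p] [Fact p.Prime] (ha : IsPSemisimple k p a) :
    IsPSemisimple k p (LieAlgebra.ad k A a) :=
  ha.map (LieAlgebra.ad k A).toLinearMap fun n => (LieAlgebra.ad_pow_char_pow a n).symm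

open Polynomial in
lemma IsPSemisimple.isSemisimple [CharP k p] {W : Type*} [AddCommGroup W] [Module k W]
    {f : Module.End k W} (hf : IsPSemisimple k p f) : f.IsSemisimple := by
  obtain ⟨c, hc⟩ := Finsupp.mem_span_range_iff_exists_finsupp.mp hf
  set g : k[X] := (c.sum fun i a => C a * X ^ p ^ (i + 1)) - X
  have hg : aeval f g = 0 := by
    simp [g, map_finsuppSum, ← Algebra.smul_def, hc]
  have hg' : derivative g = -1 := by
    simp [g, map_finsuppSum, derivative_X_pow]
  refine Module.End.isSemisimple_of_squarefree_aeval_eq_zero (Separable.squarefree ?_) hg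
  rw [separable_def, hg']
  exact isCoprime_one_right.neg_right

end IsPSemisimple

lemma exists_lie_eq_self_of_forall_lie_eq_zero {V : Type*} [AddCommGroup V] [Module k V]
    [FiniteDimensional k V] {e : Module.End k V} (he : IsNilpotent e) (𝒮 : Set (Module.End k V))
    (hss : ∀ a ∈ 𝒮, (LieAlgebra.ad k (Module.End k V) a).IsSemisimple)
    (hcomm : ∀ a ∈ 𝒮, ∀ b ∈ 𝒮, ⁅a, b⁆ = 0) (he𝒮 : ∀ a ∈ 𝒮, ⁅a, e⁆ = 0) :
    ∃ h : Module.End k V, ⁅h, e⁆ = e ∧ ∀ a ∈ 𝒮, ⁅a, h⁆ = 0 := by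
  have hcommAd : ∀ a b : Module.End k V, ⁅a, b⁆ = 0 →
      Commute (LieAlgebra.ad k (Module.End k V) a) (LieAlgebra.ad k (Module.End k V) b) :=
    fun a b hab => commute_iff_lie_eq.mpr (by rw [← LieHom.map_lie, hab, map_zero])
  obtain ⟨h₁, hh₁⟩ := Module.End.exists_lie_eq_self_of_isNilpotent he
  obtain ⟨h, hh, heh⟩ := Module.End.exists_forall_apply_eq_zero_of_commute
    (LieAlgebra.ad k (Module.End k V) '' 𝒮) (U := LieAlgebra.ad k (Module.End k V) e) (n := h₁)
    (by rintro _ ⟨a, ha, rfl⟩; exact hss a ha)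
    (by rintro _ ⟨a, ha, rfl⟩ _ ⟨b, hb, rfl⟩; exact hcommAd a b (hcomm a ha b hb))
    (by rintro _ ⟨a, ha, rfl⟩; exact hcommAd a e (he𝒮 a ha))
    (by rintro _ ⟨a, ha, rfl⟩
        rw [LieAlgebra.ad_apply, LieAlgebra.ad_apply, ← lie_skew e h₁, hh₁, lie_neg, he𝒮 a ha,
          neg_zero])
  have heh' : ⁅e, h⁆ = ⁅e, h₁⁆ := heh
  exact ⟨h, by rw [← lie_skew, heh', lie_skew, hh₁], fun a ha => hh _ ⟨a, ha, rfl⟩⟩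

namespace PStruct

variable (P : PStruct k L p) {A : Type*} [Ring A]

lemma map_iterate_pow {f : L → A} (hf : ∀ z, f (P.pow z) = f z ^ p) (n : ℕ) (z : L) :
    f (P.pow^[n] z) = f z ^ p ^ n := by
  induction n generalizing z with
  | zero => simp
  | succ n ih => rw [Function.iterate_succ_apply, ih, hf, ← pow_mul, ← pow_succ']

variable {P} [Algebra k A]

lemma IsNil.isNilpotent_map {x : L} (hx : P.IsNil x) (f : L →ₗ[k] A)
    (hf : ∀ z, f (P.pow z) = f z ^ p) : IsNilpotent (f x) := by
  obtain ⟨N, hN⟩ := hx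
  exact ⟨p ^ N, by rw [← P.map_iterate_pow hf, hN, map_zero]⟩

lemma IsSs.isPSemisimple_map {x : L} (hx : P.IsSs x) (f : L →ₗ[k] A)
    (hf : ∀ z, f (P.pow z) = f z ^ p) : IsPSemisimple k p (f x) := by
  have := Submodule.apply_mem_span_image_of_mem_span f hx
  rwa [← Set.range_comp, Function.comp_def, funext fun i => P.map_iterate_pow hf (i + 1) x] at this

lemma IsSs.isSemisimple_ad [CharP k p] {x : L} (hx : P.IsSs x) :
    (LieAlgebra.ad k L x).IsSemisimple :=
  (hx.isPSemisimple_map (LieAlgebra.ad k L).toLinearMap P.ad_pow).isSemisimple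

lemma lie_eq_zero_of_forall_isSs [IsAlgClosed k] [CharP k p] (t : LieSubalgebra k L)
    [FiniteDimensional k t] (ht : ∀ x ∈ t, P.IsSs x) {s y : L} (hs : s ∈ t) (hy : y ∈ t) :
    ⁅s, y⁆ = 0 := by
  have hinv : t.toSubmodule ∈ (LieAlgebra.ad k L s).invtSubmodule := fun z hz => t.lie_mem hs hz
  set D := (LieAlgebra.ad k L s).restrict hinv
  suffices D = 0 from congr_arg Subtype.val (LinearMap.congr_fun this ⟨y, hy⟩)
  refine ((ht s hs).isSemisimple_ad.restrict hinv).eq_zero_iff_forall_eigenvalue.mpr fun μ hμ => ?_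
  obtain ⟨⟨w, hwt⟩, hw, hw0⟩ := hμ.exists_hasEigenvector
  have hsw : ⁅s, w⁆ = μ • w := congr_arg Subtype.val (Module.End.mem_eigenspace_iff.mp hw)
  have hws : ⁅w, s⁆ = 0 := by
    refine (ht w hwt).isSemisimple_ad.apply_eq_zero_of_apply_apply_eq_zero ?_
    rw [LieAlgebra.ad_apply, LieAlgebra.ad_apply, ← lie_skew w s, hsw, lie_neg, lie_smul, lie_self,
      smul_zero, neg_zero]
  have hμw : μ • w = 0 := by rw [← hsw, ← lie_skew, hws, neg_zero]
  exact (smul_eq_zero.mp hμw).resolve_right fun h => hw0 (Subtype.ext h)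

end PStruct

section Richardson

variable {V : Type*} [AddCommGroup V] [Module k V] {ρ : L →ₗ⁅k⁆ Module.End k V}
  {R : Submodule k (Module.End k V)}

lemma eq_zero_of_map_mem_compl (hfaith : Function.Injective ρ)
    (hcompl : IsCompl (LieHom.range ρ).toSubmodule R) {x : L} (hx : ρ x ∈ R) : x = 0 :=
  hfaith <| (Submodule.disjoint_def.mp hcompl.disjoint _ ⟨x, rfl⟩ hx).trans ρ.map_zero.symm

lemma exists_eq_map_add_mem_compl (hcompl : IsCompl (LieHom.range ρ).toSubmodule R)
    (h : Module.End k V) : ∃ y : L, ∃ r ∈ R, h = ρ y + r := by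
  obtain ⟨_, ⟨y, rfl⟩, r, hr, rfl⟩ :=
    Submodule.mem_sup.mp (hcompl.sup_eq_top ▸ Submodule.mem_top (x := h))
  exact ⟨y, r, hr, rfl⟩

lemma lie_eq_zero_of_lie_map_add_eq_zero (hfaith : Function.Injective ρ)
    (hcompl : IsCompl (LieHom.range ρ).toSubmodule R) (hinv : ∀ x : L, ∀ r ∈ R, ⁅ρ x, r⁆ ∈ R)
    {s y : L} {r : Module.End k V} (hr : r ∈ R) (h : ⁅ρ s, ρ y + r⁆ = 0) : ⁅s, y⁆ = 0 := by
  refine eq_zero_of_map_mem_compl hfaith hcompl ?_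
  rw [LieHom.map_lie, eq_neg_of_add_eq_zero_left ((lie_add _ _ _).symm.trans h)]
  exact R.neg_mem (hinv s r hr)

lemma eq_zero_of_lie_map_add_eq_self (hfaith : Function.Injective ρ)
    (hcompl : IsCompl (LieHom.range ρ).toSubmodule R) (hinv : ∀ x : L, ∀ r ∈ R, ⁅ρ x, r⁆ ∈ R)
    {x y : L} {r : Module.End k V} (hr : r ∈ R) (hxy : ⁅x, y⁆ = 0) (h : ⁅ρ y + r, ρ x⁆ = ρ x) :
    x = 0 := by
  refine eq_zero_of_map_mem_compl hfaith hcompl ?_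
  rw [← h, add_lie, ← LieHom.map_lie, ← lie_skew, hxy, neg_zero, map_zero, zero_add, ← lie_skew]
  exact R.neg_mem (hinv x r hr)

end Richardson

theorem center_of_centralizer_toral_general
    [IsAlgClosed k] [CharP k p] (hp : 2 < p) [FiniteDimensional k L]
    (P : PStruct k L p)
    (V : Type*) [AddCommGroup V] [Module k V] [FiniteDimensional k V]
    (ρ : L →ₗ⁅k⁆ Module.End k V)
    (hfaith : Function.Injective ρ)
    (hres : ∀ x : L, ρ (P.pow x) = (ρ x) ^ p)
    (R : Submodule k (Module.End k V))
    (hcompl : IsCompl (LieHom.range ρ).toSubmodule R)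
    (hinv : ∀ x : L, ∀ r ∈ R, ⁅ρ x, r⁆ ∈ R)
    (t : LieSubalgebra k L)
    (ht_ss : ∀ x ∈ t, P.IsSs x)
    (x : L)
    (hx₀ : ∀ s ∈ t, ⁅s, x⁆ = 0)
    (hxz : ∀ y : L, (∀ s ∈ t, ⁅s, y⁆ = 0) → ⁅x, y⁆ = 0)
    (hxnil : P.IsNil x) :
    x = 0 := by
  have : Fact p.Prime := ⟨CharP.char_is_prime_of_two_le k p hp.le⟩
  obtain ⟨h, hhe, hh⟩ := exists_lie_eq_self_of_forall_lie_eq_zero (e := ρ x)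
    (hxnil.isNilpotent_map ρ.toLinearMap hres) (ρ '' t)
    (by rintro _ ⟨s, hs, rfl⟩
        exact ((ht_ss s hs).isPSemisimple_map ρ.toLinearMap hres).ad.isSemisimple)
    (by rintro _ ⟨s, hs, rfl⟩ _ ⟨s', hs', rfl⟩
        rw [← LieHom.map_lie, P.lie_eq_zero_of_forall_isSs t ht_ss hs hs', map_zero])
    (by rintro _ ⟨s, hs, rfl⟩; rw [← LieHom.map_lie, hx₀ s hs, map_zero])
  obtain ⟨y, r, hr, rfl⟩ := exists_eq_map_add_mem_compl hcompl h
  refine eq_zero_of_lie_map_add_eq_self hfaith hcompl hinv hr (hxz y fun s hs => ?_) hhe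
  exact lie_eq_zero_of_lie_map_add_eq_zero hfaith hcompl hinv hr (hh _ ⟨s, hs, rfl⟩)

/-- Suppose `L` is a finite dimensional restricted Lie algebra over an
algebraically closed field of characteristic `p > 2` possessing a Richardson module `V`,
`t` is a toral subalgebra, and `L₀ = c_L(t)` is its centraliser. Then the centre of `L₀`
contains no nonzero nilpotent element of `L` (so it is a toral subalgebra). -/
theorem center_of_centralizer_toral
    [IsAlgClosed k] [CharP k p] (hp : 2 < p) [FiniteDimensional k L]
    (P : PStruct k L p)
    (V : Type*) [AddCommGroup V] [Module k V] [FiniteDimensional k V]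
    (ρ : L →ₗ⁅k⁆ Module.End k V)
    (hfaith : Function.Injective ρ)
    (hres : ∀ x : L, ρ (P.pow x) = (ρ x) ^ p)
    (R : Submodule k (Module.End k V))
    (hcompl : IsCompl (LieHom.range ρ).toSubmodule R)
    (hinv : ∀ x : L, ∀ r ∈ R, ⁅ρ x, r⁆ ∈ R)
    (t : LieSubalgebra k L) (ht_pow : ∀ x ∈ t, P.pow x ∈ t)
    (ht_ss : ∀ x ∈ t, P.IsSs x)
    (x : L)
    (hx₀ : ∀ s ∈ t, ⁅s, x⁆ = 0)
    (hxz : ∀ y : L, (∀ s ∈ t, ⁅s, y⁆ = 0) → ⁅x, y⁆ = 0)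
    (hxnil : P.IsNil x) :
    x = 0 :=
  center_of_centralizer_toral_general hp P V ρ hfaith hres R hcompl hinv t ht_ss x hx₀ hxz hxnil
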